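/- arXiv:2111.11194 — 2 statements merged into one kernel-verified Lean document; each statement's English description precedes it below -/
import Mathlib

section
/- Let D* = {z ∈ ℂ : 0 < |z| ≤ 1} be the punctured closed disk, and let φ : D* → D* be a proper continuous map such that φ⁻¹(∂D*) = ∂D* and φ restricted to ∂D* = {|z| = 1} is a homeomorphism onto ∂D*. Then φ is properly homotopic, relative to ∂D*, to a homeomorphism D* → D*. -/
/-!
Put `r = max ‖z‖ (1 - t)` and `H (z, t) = r • φ (z / r)`. For `t = 0` and on the boundary circle
`r = 1`, so `H = φ` there, while `H (·, 1)` is the cone `z ↦ ‖z‖ • φ (z / ‖z‖)` over the boundary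
homeomorphism; coning is functorial, so the cone over its inverse is an inverse.

A subset of `D*` is relatively compact iff its norms are bounded away from `0`. If `H (z, t)` stays
in such a set, then `‖H (z, t)‖ ≤ min r ‖φ (z / r)‖` keeps `r` and, by properness of `φ`, also
`‖z / r‖` away from `0`, and hence `‖z‖ = r ‖z / r‖`.
-/

def PuncturedDisk : Set ℂ := {z : ℂ | 0 < ‖z‖ ∧ ‖z‖ ≤ 1}

def PuncturedDiskBoundary : Set PuncturedDisk := {z : PuncturedDisk | ‖(z : ℂ)‖ = 1}

open unitInterval

namespace PuncturedDisk

lemma real_smul_mem {a : ℝ} (ha : 0 < a) {z : ℂ} (hz : 0 < ‖z‖) (h : a * ‖z‖ ≤ 1) :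
    a • z ∈ PuncturedDisk := by
  rw [PuncturedDisk, Set.mem_ofPred_eq, norm_smul_of_nonneg ha.le]
  exact ⟨mul_pos ha hz, h⟩

lemma isCompact_setOf_le_norm {a : ℝ} (ha : 0 < a) :
    IsCompact {z : PuncturedDisk | a ≤ ‖(z : ℂ)‖} := by
  rw [Subtype.isCompact_iff]
  convert (isCompact_closedBall (0 : ℂ) 1).diff (Metric.isOpen_ball (x := 0) (ε := a)) using 1
  ext w
  simp only [Set.mem_image, Set.mem_ofPred_eq, Set.mem_sdiff, Metric.mem_closedBall,
    Metric.mem_ball, dist_zero_right, not_lt]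
  constructor
  · rintro ⟨z, hz, rfl⟩
    exact ⟨z.2.2, hz⟩
  · rintro ⟨hw1, hwa⟩
    exact ⟨⟨w, ha.trans_le hwa, hw1⟩, hwa, rfl⟩

lemma exists_pos_le_norm_of_isCompact {K : Set PuncturedDisk} (hK : IsCompact K) :
    ∃ a > 0, ∀ z ∈ K, a ≤ ‖(z : ℂ)‖ :=
  hK.exists_forall_le' continuous_subtype_val.norm.continuousOn fun z _ => z.2.1

lemma isCompact_boundary : IsCompact PuncturedDiskBoundary := by
  convert isCompact_setOf_le_norm one_pos using 1
  ext z
  exact ⟨ge_of_eq, z.2.2.antisymm⟩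

instance : CompactSpace PuncturedDiskBoundary :=
  isCompact_iff_compactSpace.mp isCompact_boundary

noncomputable def boundaryRetraction (z : PuncturedDisk) : PuncturedDiskBoundary :=
  ⟨⟨‖(z : ℂ)‖⁻¹ • (z : ℂ), real_smul_mem (inv_pos.2 z.2.1) z.2.1
      (inv_mul_cancel₀ z.2.1.ne').le⟩,
    by
      change ‖‖(z : ℂ)‖⁻¹ • (z : ℂ)‖ = 1
      rw [norm_smul_of_nonneg (inv_pos.2 z.2.1).le, inv_mul_cancel₀ z.2.1.ne']⟩

lemma continuous_boundaryRetraction : Continuous boundaryRetraction :=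
  ((continuous_subtype_val.norm.inv₀ fun z => z.2.1.ne').smul
    continuous_subtype_val).subtype_mk _ |>.subtype_mk _

noncomputable def radialExtension (g : PuncturedDiskBoundary → PuncturedDiskBoundary)
    (z : PuncturedDisk) : PuncturedDisk :=
  ⟨‖(z : ℂ)‖ • ((g (boundaryRetraction z) : PuncturedDisk) : ℂ),
    real_smul_mem z.2.1 (g _).1.2.1 (by rw [(g _).2, mul_one]; exact z.2.2)⟩

variable (g h : PuncturedDiskBoundary → PuncturedDiskBoundary)

lemma coe_radialExtension (z : PuncturedDisk) :
    (radialExtension g z : ℂ) = ‖(z : ℂ)‖ • ((g (boundaryRetraction z) : PuncturedDisk) : ℂ) :=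
  rfl

lemma norm_radialExtension (z : PuncturedDisk) : ‖(radialExtension g z : ℂ)‖ = ‖(z : ℂ)‖ := by
  rw [coe_radialExtension, norm_smul_of_nonneg (norm_nonneg _), (g _).2, mul_one]

lemma boundaryRetraction_radialExtension (z : PuncturedDisk) :
    boundaryRetraction (radialExtension g z) = g (boundaryRetraction z) := by
  refine Subtype.ext (Subtype.ext ?_)
  change ‖(radialExtension g z : ℂ)‖⁻¹ • (radialExtension g z : ℂ) = _
  rw [norm_radialExtension, coe_radialExtension, inv_smul_smul₀ z.2.1.ne']

lemma radialExtension_id (z : PuncturedDisk) : radialExtension id z = z :=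
  Subtype.ext (smul_inv_smul₀ z.2.1.ne' (z : ℂ))

lemma radialExtension_radialExtension (z : PuncturedDisk) :
    radialExtension g (radialExtension h z) = radialExtension (g ∘ h) z := by
  apply Subtype.ext
  rw [coe_radialExtension, norm_radialExtension, boundaryRetraction_radialExtension]
  rfl

variable {g} in
lemma continuous_radialExtension (hg : Continuous g) : Continuous (radialExtension g) :=
  (continuous_subtype_val.norm.smul (continuous_subtype_val.comp
    (continuous_subtype_val.comp (hg.comp continuous_boundaryRetraction)))).subtype_mk _

noncomputable def radialExtensionHomeomorph (e : PuncturedDiskBoundary ≃ₜ PuncturedDiskBoundary) :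
    PuncturedDisk ≃ₜ PuncturedDisk where
  toFun := radialExtension e
  invFun := radialExtension e.symm
  left_inv z := by
    rw [radialExtension_radialExtension, e.symm_comp_self, radialExtension_id]
  right_inv z := by
    rw [radialExtension_radialExtension, e.self_comp_symm, radialExtension_id]
  continuous_toFun := continuous_radialExtension e.continuous
  continuous_invFun := continuous_radialExtension e.symm.continuous

section Homotopy

/-- With `r = max ‖z‖ (1 - t)`, the homotopy `r • φ (z / r)` is `(1 - t) • φ (z / (1 - t))` for
`‖z‖ ≤ 1 - t` and `‖z‖ • φ (z / ‖z‖)` otherwise. -/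
noncomputable def homotopyRadius (z : PuncturedDisk) (t : I) : ℝ := max ‖(z : ℂ)‖ (1 - t)

lemma norm_le_homotopyRadius (z : PuncturedDisk) (t : I) : ‖(z : ℂ)‖ ≤ homotopyRadius z t :=
  le_max_left _ _

lemma homotopyRadius_pos (z : PuncturedDisk) (t : I) : 0 < homotopyRadius z t :=
  z.2.1.trans_le (norm_le_homotopyRadius z t)

lemma homotopyRadius_le_one (z : PuncturedDisk) (t : I) : homotopyRadius z t ≤ 1 :=
  max_le z.2.2 (sub_le_self 1 t.2.1)

lemma homotopyRadius_zero (z : PuncturedDisk) : homotopyRadius z 0 = 1 := by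
  simp [homotopyRadius, z.2.2]

lemma homotopyRadius_one (z : PuncturedDisk) : homotopyRadius z 1 = ‖(z : ℂ)‖ := by
  simp [homotopyRadius]

lemma homotopyRadius_of_mem_boundary {z : PuncturedDisk} (hz : z ∈ PuncturedDiskBoundary)
    (t : I) : homotopyRadius z t = 1 := by
  simp [homotopyRadius, show ‖(z : ℂ)‖ = 1 from hz, t.2.1]

lemma continuous_homotopyRadius : Continuous fun p : PuncturedDisk × I => homotopyRadius p.1 p.2 :=
  (continuous_subtype_val.comp continuous_fst).norm.max
    (continuous_const.sub (continuous_subtype_val.comp continuous_snd))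

noncomputable def homotopyRescale (z : PuncturedDisk) (t : I) : PuncturedDisk :=
  ⟨(homotopyRadius z t)⁻¹ • (z : ℂ), real_smul_mem (inv_pos.2 (homotopyRadius_pos z t)) z.2.1
    (inv_mul_le_one_of_le₀ (norm_le_homotopyRadius z t) (homotopyRadius_pos z t).le)⟩

lemma homotopyRadius_mul_norm_homotopyRescale (z : PuncturedDisk) (t : I) :
    homotopyRadius z t * ‖(homotopyRescale z t : ℂ)‖ = ‖(z : ℂ)‖ := by
  change _ * ‖(homotopyRadius z t)⁻¹ • (z : ℂ)‖ = _
  rw [norm_smul_of_nonneg (inv_pos.2 (homotopyRadius_pos z t)).le,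
    mul_inv_cancel_left₀ (homotopyRadius_pos z t).ne']

lemma continuous_homotopyRescale :
    Continuous fun p : PuncturedDisk × I => homotopyRescale p.1 p.2 :=
  ((continuous_homotopyRadius.inv₀ fun p => (homotopyRadius_pos p.1 p.2).ne').smul
    (continuous_subtype_val.comp continuous_fst)).subtype_mk _

variable (φ : PuncturedDisk → PuncturedDisk)

noncomputable def radialHomotopy (p : PuncturedDisk × I) : PuncturedDisk :=
  ⟨homotopyRadius p.1 p.2 • (φ (homotopyRescale p.1 p.2) : ℂ),
    real_smul_mem (homotopyRadius_pos p.1 p.2) (φ _).2.1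
      (mul_le_one₀ (homotopyRadius_le_one p.1 p.2) (norm_nonneg _) (φ _).2.2)⟩

lemma norm_radialHomotopy (z : PuncturedDisk) (t : I) :
    ‖(radialHomotopy φ (z, t) : ℂ)‖ = homotopyRadius z t * ‖(φ (homotopyRescale z t) : ℂ)‖ :=
  norm_smul_of_nonneg (homotopyRadius_pos z t).le _

lemma radialHomotopy_of_homotopyRadius_eq_one {z : PuncturedDisk} {t : I}
    (h : homotopyRadius z t = 1) : radialHomotopy φ (z, t) = φ z := by
  have hz : homotopyRescale z t = z := Subtype.ext (by simp [homotopyRescale, h])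
  exact Subtype.ext (by simp [radialHomotopy, h, hz])

lemma radialHomotopy_one {g : PuncturedDiskBoundary → PuncturedDiskBoundary}
    (hg : ∀ u, (g u : PuncturedDisk) = φ u) (z : PuncturedDisk) :
    radialHomotopy φ (z, 1) = radialExtension g z := by
  have hz : homotopyRescale z 1 = boundaryRetraction z :=
    Subtype.ext (by simp [homotopyRescale, boundaryRetraction, homotopyRadius_one])
  exact Subtype.ext (by simp [radialHomotopy, coe_radialExtension, hz, hg, homotopyRadius_one])

variable {φ}

lemma continuous_radialHomotopy (hφ : Continuous φ) : Continuous (radialHomotopy φ) :=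
  (continuous_homotopyRadius.smul
    (continuous_subtype_val.comp (hφ.comp continuous_homotopyRescale))).subtype_mk _

lemma isProperMap_radialHomotopy (hφ : IsProperMap φ) : IsProperMap (radialHomotopy φ) := by
  refine isProperMap_iff_isCompact_preimage.2
    ⟨continuous_radialHomotopy hφ.continuous, fun K hK => ?_⟩
  obtain ⟨ε, hε, hKε⟩ := exists_pos_le_norm_of_isCompact hK
  obtain ⟨δ, hδ, hδε⟩ :=
    exists_pos_le_norm_of_isCompact (hφ.isCompact_preimage (isCompact_setOf_le_norm hε))
  refine ((isCompact_setOf_le_norm (mul_pos hδ hε)).prod isCompact_univ).of_isClosed_subset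
    (hK.isClosed.preimage (continuous_radialHomotopy hφ.continuous)) ?_
  rintro ⟨z, t⟩ hzt
  have hHz := hKε _ hzt
  rw [norm_radialHomotopy] at hHz
  have hr := homotopyRadius_pos z t
  have hεr : ε ≤ homotopyRadius z t :=
    hHz.trans (mul_le_of_le_one_right hr.le (φ _).2.2)
  have hδw : δ ≤ ‖(homotopyRescale z t : ℂ)‖ :=
    hδε _ (hHz.trans (mul_le_of_le_one_left (norm_nonneg _) (homotopyRadius_le_one z t)))
  refine ⟨?_, Set.mem_univ t⟩
  change δ * ε ≤ ‖(z : ℂ)‖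
  rw [← homotopyRadius_mul_norm_homotopyRescale, mul_comm (homotopyRadius z t)]
  exact mul_le_mul hδw hεr hε.le (norm_nonneg _)

end Homotopy

end PuncturedDisk

open PuncturedDisk

theorem punctured_disk_proper_rigidity_general
    (φ : PuncturedDisk → PuncturedDisk) (hφ : IsProperMap φ)
    (hbij : Set.BijOn φ PuncturedDiskBoundary PuncturedDiskBoundary) :
    ∃ ψ : PuncturedDisk ≃ₜ PuncturedDisk,
      ∃ H : PuncturedDisk × unitInterval → PuncturedDisk,
        IsProperMap H ∧ (∀ z, H (z, 0) = φ z) ∧ (∀ z, H (z, 1) = ψ z) ∧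
        (∀ z ∈ PuncturedDiskBoundary, ∀ t, H (z, t) = φ z) := by
  let e : PuncturedDiskBoundary ≃ₜ PuncturedDiskBoundary :=
    (hφ.continuous.restrict hbij.mapsTo).homeoOfEquivCompactToT2 (f := hbij.equiv φ)
  refine ⟨radialExtensionHomeomorph e, radialHomotopy φ, isProperMap_radialHomotopy hφ,
    fun z => ?_, radialHomotopy_one φ fun _ => rfl, fun z hz t => ?_⟩
  · exact radialHomotopy_of_homotopyRadius_eq_one φ (homotopyRadius_zero z)
  · exact radialHomotopy_of_homotopyRadius_eq_one φ (homotopyRadius_of_mem_boundary hz t)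

/-- Proper rigidity of the punctured disk: a proper continuous self-map `φ` of the
punctured closed disk `D*` with `φ⁻¹(∂D*) = ∂D*` that restricts to a homeomorphism of the
boundary circle `∂D*` is properly homotopic, relative to `∂D*`, to a homeomorphism of `D*`. -/
theorem punctured_disk_proper_rigidity
    (φ : PuncturedDisk → PuncturedDisk) (hφ : IsProperMap φ)
    (hbd : φ ⁻¹' PuncturedDiskBoundary = PuncturedDiskBoundary)
    (hbij : Set.BijOn φ PuncturedDiskBoundary PuncturedDiskBoundary) :
    ∃ ψ : PuncturedDisk ≃ₜ PuncturedDisk,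
      ∃ H : PuncturedDisk × unitInterval → PuncturedDisk,
        IsProperMap H ∧ (∀ z, H (z, 0) = φ z) ∧ (∀ z, H (z, 1) = ψ z) ∧
        (∀ z ∈ PuncturedDiskBoundary, ∀ t, H (z, t) = φ z) :=
  punctured_disk_proper_rigidity_general φ hφ hbij
end

section
/- The explicit homotopy H : D* × [0,1] → D* defined by H(z,t) = (1−t)·φ(z/(1−t)) if 0 < |z| ≤ 1−t, and H(z,t) = |z|·φ(z/|z|) if 1−t < |z| ≤ 1, where D* = {z ∈ ℂ : 0 < |z| ≤ 1} and φ : D* → D* is a proper continuous map with φ⁻¹(∂D*) = ∂D*, is a proper map: for any sequence (zₙ, tₙ) in D* × [0,1] with zₙ → 0, we have H(zₙ, tₙ) → 0. -/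
open Filter Topology

/-- The Alexander-trick homotopy `H(z,t) = (1−t)·φ(z/(1−t))` for `0 < |z| ≤ 1−t` and
`H(z,t) = |z|·φ(z/|z|)` for `1−t < |z| ≤ 1`. -/
noncomputable def alexanderH (φ : PuncturedDisk → PuncturedDisk)
    (z : PuncturedDisk) (t : unitInterval) : ℂ :=
  if h : ‖(z : ℂ)‖ ≤ 1 - (t : ℝ) then
    (((1 - (t : ℝ)) : ℝ) : ℂ) * (φ ⟨(z : ℂ) / ((((1 - (t : ℝ)) : ℝ)) : ℂ), by
      have h0 : (0 : ℝ) < 1 - (t : ℝ) := lt_of_lt_of_le z.2.1 h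
      have hn : ‖(z : ℂ) / ((((1 - (t : ℝ)) : ℝ)) : ℂ)‖ = ‖(z : ℂ)‖ / (1 - (t : ℝ)) := by
        rw [norm_div, Complex.norm_real, Real.norm_eq_abs, abs_of_pos h0]
      exact ⟨by rw [hn]; exact div_pos z.2.1 h0,
        by rw [hn]; exact (div_le_one h0).mpr h⟩⟩ : ℂ)
  else
    ((‖(z : ℂ)‖ : ℝ) : ℂ) * (φ ⟨(z : ℂ) / ((‖(z : ℂ)‖ : ℝ) : ℂ), by
      have h0 : (0 : ℝ) < ‖(z : ℂ)‖ := z.2.1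
      have hn : ‖(z : ℂ) / ((‖(z : ℂ)‖ : ℝ) : ℂ)‖ = 1 := by
        rw [norm_div, Complex.norm_real, Real.norm_eq_abs, abs_of_pos h0, div_self h0.ne']
      exact ⟨by rw [hn]; norm_num, le_of_eq hn⟩⟩ : ℂ)


/-!
Write `H(z,t) = s • φ(z/s)` with scale `s = max |z| (1 - t) ∈ [|z|, 1]`. Along a sequence with
`zₙ → 0`, either `sₙ` is small, and then so is `|H| ≤ sₙ`, or `sₙ` is bounded below, and then
`zₙ / sₙ → 0`, so `φ(zₙ / sₙ) → 0`: on `D*` the cocompact filter is the filter of approaching `0`,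
and a proper map preserves cocompact filters.
-/

namespace PuncturedDisk

lemma isCompact_setOf_le_norm_s8 {ε : ℝ} (hε : 0 < ε) :
    IsCompact {v : PuncturedDisk | ε ≤ ‖(v : ℂ)‖} := by
  rw [Subtype.isCompact_iff]
  have himage : ((↑) : PuncturedDisk → ℂ) '' {v | ε ≤ ‖(v : ℂ)‖} =
      Metric.closedBall 0 1 ∩ (Metric.ball 0 ε)ᶜ := by
    ext z
    simp only [Set.mem_image, Set.mem_ofPred_eq, Subtype.exists, exists_and_right,
      exists_eq_right, Set.mem_inter_iff, Metric.mem_closedBall, dist_zero_right,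
      Set.mem_compl_iff, Metric.mem_ball, not_lt]
    exact ⟨fun ⟨hz, hεz⟩ => ⟨hz.2, hεz⟩, fun ⟨hz, hεz⟩ => ⟨⟨hε.trans_le hεz, hz⟩, hεz⟩⟩
  rw [himage]
  exact (isCompact_closedBall 0 1).inter_right Metric.isOpen_ball.isClosed_compl

lemma cocompact_eq_comap_nhds_zero :
    cocompact PuncturedDisk = comap (↑) (𝓝 (0 : ℂ)) := by
  apply le_antisymm
  · refine (Metric.nhds_basis_ball.comap _).ge_iff.mpr fun ε hε => ?_
    refine mem_cocompact'.mpr ⟨_, isCompact_setOf_le_norm_s8 hε, fun v hv => ?_⟩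
    simpa using hv
  · refine hasBasis_cocompact.ge_iff.mpr fun K hK => ?_
    have hK' : IsCompact (((↑) : PuncturedDisk → ℂ) '' K) := hK.image continuous_subtype_val
    refine ⟨_, hK'.isClosed.isOpen_compl.mem_nhds ?_, fun v hv hvK => hv ⟨v, hvK, rfl⟩⟩
    rintro ⟨v, -, hv⟩
    simpa [← hv] using v.2.1

lemma tendsto_nhds_zero_of_isProperMap {φ : PuncturedDisk → PuncturedDisk} (hφ : IsProperMap φ) :
    Tendsto (fun w => (φ w : ℂ)) (comap ((↑) : PuncturedDisk → ℂ) (𝓝 0)) (𝓝 0) := by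
  have hφ' := (isProperMap_iff_tendsto_cocompact.mp hφ).2
  rw [cocompact_eq_comap_nhds_zero] at hφ'
  exact tendsto_comap_iff.mp hφ'

end PuncturedDisk

lemma tendsto_smul_comp_of_tendsto_smul {ι X E F : Type*} [NormedAddCommGroup E]
    [NormedSpace ℝ E] [NormedAddCommGroup F] [NormedSpace ℝ F] {l : Filter ι}
    {p : X → E} {g : X → F} (hg_le : ∀ x, ‖g x‖ ≤ 1) (hg : Tendsto g (comap p (𝓝 0)) (𝓝 0))
    {s : ι → ℝ} {w : ι → X} (hs : ∀ i, s i ∈ Set.Icc 0 1)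
    (hsw : Tendsto (fun i => s i • p (w i)) l (𝓝 0)) :
    Tendsto (fun i => s i • g (w i)) l (𝓝 0) := by
  rw [(Metric.nhds_basis_ball.comap p).tendsto_iff Metric.nhds_basis_ball] at hg
  rw [Metric.tendsto_nhds] at hsw ⊢
  intro ε hε
  obtain ⟨δ, hδ, hgδ⟩ := hg ε hε
  filter_upwards [hsw (δ * ε) (by positivity)] with i hi
  obtain ⟨hs0, hs1⟩ := hs i
  simp only [dist_zero_right, norm_smul, Real.norm_of_nonneg hs0] at hi ⊢
  rcases lt_or_ge (s i) ε with hsε | hεs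
  · calc s i * ‖g (w i)‖ ≤ s i * 1 := by gcongr; exact hg_le _
      _ < ε := by rwa [mul_one]
  · -- once the scale is at least `ε`, the argument `w i` itself is `δ`-small
    have hpw : p (w i) ∈ Metric.ball 0 δ := by
      rw [mem_ball_zero_iff]
      nlinarith [norm_nonneg (p (w i))]
    calc s i * ‖g (w i)‖ ≤ 1 * ‖g (w i)‖ := by gcongr
      _ < ε := by simpa using hgδ (w i) hpw

lemma alexanderH_eq_smul (φ : PuncturedDisk → PuncturedDisk) (z : PuncturedDisk)
    (t : unitInterval) : ∃ w : PuncturedDisk,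
      max ‖(z : ℂ)‖ (1 - t) • (w : ℂ) = z ∧
      alexanderH φ z t = max ‖(z : ℂ)‖ (1 - t) • (φ w : ℂ) := by
  unfold alexanderH
  simp only [Complex.real_smul]
  split_ifs with h
  · rw [max_eq_right h]
    refine ⟨_, ?_, rfl⟩
    exact mul_div_cancel₀ _ (Complex.ofReal_ne_zero.mpr (z.2.1.trans_le h).ne')
  · rw [max_eq_left (not_le.mp h).le]
    refine ⟨_, ?_, rfl⟩
    exact mul_div_cancel₀ _ (Complex.ofReal_ne_zero.mpr z.2.1.ne')

theorem alexanderH_isProper_general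
    (φ : PuncturedDisk → PuncturedDisk) (hφ : IsProperMap φ)
    (zs : ℕ → PuncturedDisk) (ts : ℕ → unitInterval)
    (hzs : Tendsto (fun n => ((zs n : ℂ))) atTop (𝓝 0)) :
    Tendsto (fun n => alexanderH φ (zs n) (ts n)) atTop (𝓝 0) := by
  choose ws hws_smul hH using fun n => alexanderH_eq_smul φ (zs n) (ts n)
  simp only [hH]
  refine tendsto_smul_comp_of_tendsto_smul (fun w => (φ w).2.2)
    (PuncturedDisk.tendsto_nhds_zero_of_isProperMap hφ) (fun n => ⟨?_, ?_⟩)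
    (by simpa [hws_smul] using hzs)
  · exact (norm_nonneg _).trans (le_max_left _ _)
  · exact max_le (zs n).2.2 (by linarith [(ts n).2.1])

/-- The explicit Alexander homotopy is proper: if `φ : D* → D*` is a proper continuous map
with `φ⁻¹(∂D*) = ∂D*`, then for any sequence `(zₙ, tₙ)` in `D* × [0,1]` with `zₙ → 0` we
have `H(zₙ, tₙ) → 0`. -/
theorem alexanderH_isProper
    (φ : PuncturedDisk → PuncturedDisk) (hφ : IsProperMap φ)
    (hbd : φ ⁻¹' {z : PuncturedDisk | ‖(z : ℂ)‖ = 1} = {z : PuncturedDisk | ‖(z : ℂ)‖ = 1})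
    (zs : ℕ → PuncturedDisk) (ts : ℕ → unitInterval)
    (hzs : Tendsto (fun n => ((zs n : ℂ))) atTop (𝓝 0)) :
    Tendsto (fun n => alexanderH φ (zs n) (ts n)) atTop (𝓝 0) :=
  alexanderH_isProper_general φ hφ zs ts hzs
end
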